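/- There exists a constant C > 0 such that for every B ≥ 0, every ε ∈ (0,1), every i ∈ {1,2}, every p ∈ ℝ and every k with 0 < |k| ≤ 1/2 and ε|p| < |k|, one has |ω_{i,B}(k + εp/2) − ω_{i,B}(k − εp/2) − εp·v_B(k)| ≤ C·ε²·p²/|k|. -/

import Mathlib

/-- `α̂(k) = 4 sin²(πk)`. -/
noncomputable def alphaHat (k : ℝ) : ℝ := 4 * Real.sin (Real.pi * k) ^ 2

/-- `ω_{i,B}(k) = √(α̂(k) + B²/4) ± B/2` (plus sign for `i = 1`, minus for `i = 2`). -/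
noncomputable def omegaF (B : ℝ) (i : ℕ) (k : ℝ) : ℝ :=
  Real.sqrt (alphaHat k + B ^ 2 / 4) + (if i = 1 then B / 2 else -(B / 2))

/-- `v_B(k) = α̂′(k)/(2√(α̂(k) + B²/4))`. -/
noncomputable def vF (B : ℝ) (k : ℝ) : ℝ :=
  deriv alphaHat k / (2 * Real.sqrt (alphaHat k + B ^ 2 / 4))

/-! Both `ω_{i,B}` are `√(α̂ + B²/4)` shifted by a constant, and `v_B` is the derivative of that
root, so the left-hand side is a symmetric second-order Taylor remainder, at most
`2 · sup |v_B′| · (εp/2)²` over the ball of radius `|k|/2` around `k`. There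
`v_B′ = (α̂″/2 − v_B²) / √(α̂ + B²/4)`; the numerator is at most `8π²` because `α̂′² ≤ 16π² α̂`,
and the root is at least `2 |sin πx| ≥ 2|k|/3`. -/

open Real Metric Set

theorem abs_sub_sub_two_mul_le_of_abs_deriv_le {f f' f'' : ℝ → ℝ} {k r M : ℝ}
    (hf : ∀ x ∈ closedBall k r, HasDerivAt f (f' x) x)
    (hf' : ∀ x ∈ closedBall k r, HasDerivAt f' (f'' x) x)
    (hM : ∀ x ∈ closedBall k r, |f'' x| ≤ M) {y : ℝ} (hy : |y| ≤ r) :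
    |f (k + y) - f (k - y) - 2 * f' k * y| ≤ 2 * M * y ^ 2 := by
  have hk : k ∈ closedBall k r := mem_closedBall_self ((abs_nonneg y).trans hy)
  have hM0 : 0 ≤ M := (abs_nonneg _).trans (hM k hk)
  have hmem : ∀ t ∈ Icc (-|y|) |y|, k + t ∈ closedBall k r ∧ k - t ∈ closedBall k r := by
    intro t ht
    have : |t| ≤ r := (abs_le.2 ht).trans hy
    simp only [mem_closedBall, dist_eq_norm, Real.norm_eq_abs]
    constructor
    · simpa using this
    · simpa [abs_neg] using this
  have lip : ∀ x ∈ closedBall k r, |f' x - f' k| ≤ M * |x - k| := fun x hx =>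
    (convex_closedBall k r).norm_image_sub_le_of_norm_hasDerivWithin_le
      (fun z hz => (hf' z hz).hasDerivWithinAt) hM hk hx
  have hD : ∀ t ∈ Icc (-|y|) |y|, HasDerivWithinAt
      (fun t => f (k + t) - f (k - t) - 2 * f' k * t)
      (f' (k + t) + f' (k - t) - 2 * f' k) (Icc (-|y|) |y|) t := by
    intro t ht
    have h₁ := (hf _ (hmem t ht).1).comp_const_add k t
    have h₂ := (hf _ (hmem t ht).2).comp_const_sub k t
    have h₃ : HasDerivAt (fun t => 2 * f' k * t) (2 * f' k) t := by
      simpa using (hasDerivAt_id t).const_mul (2 * f' k)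
    exact ((h₁.sub h₂).sub h₃).hasDerivWithinAt.congr_deriv (by ring)
  have hD' : ∀ t ∈ Icc (-|y|) |y|, ‖f' (k + t) + f' (k - t) - 2 * f' k‖ ≤ 2 * M * |y| := by
    intro t ht
    have h₁ := lip _ (hmem t ht).1
    have h₂ := lip _ (hmem t ht).2
    simp only [add_sub_cancel_left, sub_sub_cancel_left, abs_neg] at h₁ h₂
    have ht' : M * |t| ≤ M * |y| := mul_le_mul_of_nonneg_left (abs_le.2 ht) hM0
    rw [Real.norm_eq_abs]
    calc |f' (k + t) + f' (k - t) - 2 * f' k|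
        = |(f' (k + t) - f' k) + (f' (k - t) - f' k)| := by congr 1; ring
      _ ≤ |f' (k + t) - f' k| + |f' (k - t) - f' k| := abs_add_le _ _
      _ ≤ 2 * M * |y| := by linarith
  have h0 : (0 : ℝ) ∈ Icc (-|y|) |y| := ⟨neg_nonpos.2 (abs_nonneg y), abs_nonneg y⟩
  have := (convex_Icc (-|y|) |y|).norm_image_sub_le_of_norm_hasDerivWithin_le hD hD' h0
    ⟨neg_abs_le y, le_abs_self y⟩
  simp only [add_zero, sub_zero, sub_self, mul_zero, Real.norm_eq_abs] at this
  rw [← sq_abs, sq, ← mul_assoc]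
  convert this using 3

theorem hasDerivAt_alphaHat (x : ℝ) : HasDerivAt alphaHat (4 * π * sin (2 * π * x)) x := by
  have h := (((hasDerivAt_id x).const_mul π).sin.pow 2).const_mul 4
  refine h.congr_deriv ?_
  rw [show 2 * π * x = 2 * (π * x) by ring, sin_two_mul]
  simp only [id, mul_one, Nat.cast_ofNat]
  ring

theorem hasDerivAt_four_mul_pi_mul_sin (x : ℝ) :
    HasDerivAt (fun x => 4 * π * sin (2 * π * x)) (8 * π ^ 2 * cos (2 * π * x)) x := by
  have h := (((hasDerivAt_id x).const_mul (2 * π)).sin).const_mul (4 * π)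
  refine h.congr_deriv ?_
  simp only [id, mul_one]
  ring

theorem alphaHat_nonneg (x : ℝ) : 0 ≤ alphaHat x := by unfold alphaHat; positivity

theorem sin_two_pi_mul_sq_le_alphaHat (x : ℝ) : sin (2 * π * x) ^ 2 ≤ alphaHat x := by
  rw [alphaHat, mul_assoc, sin_two_mul]
  nlinarith [sin_sq_add_cos_sq (π * x), sq_nonneg (sin (π * x)), sq_nonneg (cos (π * x)),
    mul_nonneg (sq_nonneg (sin (π * x))) (sq_nonneg (sin (π * x)))]

noncomputable def sqrtAlpha (B x : ℝ) : ℝ := √(alphaHat x + B ^ 2 / 4)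

theorem vF_eq (B x : ℝ) : vF B x = 4 * π * sin (2 * π * x) / (2 * sqrtAlpha B x) := by
  rw [vF, (hasDerivAt_alphaHat x).deriv, sqrtAlpha]

theorem sqrtAlpha_sq (B x : ℝ) : sqrtAlpha B x ^ 2 = alphaHat x + B ^ 2 / 4 :=
  sq_sqrt (by have := alphaHat_nonneg x; positivity)

theorem sqrtAlpha_nonneg (B x : ℝ) : 0 ≤ sqrtAlpha B x := sqrt_nonneg _

theorem vF_sq_le (B x : ℝ) : vF B x ^ 2 ≤ 4 * π ^ 2 := by
  rcases (sqrtAlpha_nonneg B x).eq_or_lt with h | h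
  · rw [vF_eq, ← h, mul_zero, div_zero, zero_pow two_ne_zero]; positivity
  · rw [vF_eq, div_pow, div_le_iff₀ (by positivity), mul_pow, mul_pow, mul_pow, sqrtAlpha_sq]
    nlinarith [sin_two_pi_mul_sq_le_alphaHat x, sq_nonneg B, pi_pos]

theorem hasDerivAt_sqrtAlpha {B x : ℝ} (hx : 0 < sqrtAlpha B x) :
    HasDerivAt (sqrtAlpha B) (vF B x) x := by
  have h := ((hasDerivAt_alphaHat x).add_const (B ^ 2 / 4)).sqrt (sqrt_pos.1 hx).ne'
  exact h.congr_deriv (vF_eq B x).symm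

theorem hasDerivAt_vF {B x : ℝ} (hx : 0 < sqrtAlpha B x) :
    HasDerivAt (vF B) ((4 * π ^ 2 * cos (2 * π * x) - vF B x ^ 2) / sqrtAlpha B x) x := by
  have h := (hasDerivAt_four_mul_pi_mul_sin x).div ((hasDerivAt_sqrtAlpha hx).const_mul 2)
    (by positivity)
  rw [show vF B = fun x => 4 * π * sin (2 * π * x) / (2 * sqrtAlpha B x) from funext (vF_eq B)]
  refine h.congr_deriv ?_
  rw [vF_eq]
  field_simp
  ring

theorem abs_deriv_vF_le (B x : ℝ) :
    |(4 * π ^ 2 * cos (2 * π * x) - vF B x ^ 2) / sqrtAlpha B x| ≤ 8 * π ^ 2 / sqrtAlpha B x := by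
  rw [abs_div, abs_of_nonneg (sqrtAlpha_nonneg B x)]
  refine div_le_div_of_nonneg_right (abs_le.2 ⟨?_, ?_⟩) (sqrtAlpha_nonneg B x) <;>
    nlinarith [vF_sq_le B x, sq_nonneg (vF B x), neg_one_le_cos (2 * π * x),
      cos_le_one (2 * π * x), pi_pos]

theorem two_thirds_mul_le_sin_pi_mul {x : ℝ} (h0 : 0 ≤ x) (h1 : x ≤ 3 / 4) :
    2 / 3 * x ≤ sin (π * x) := by
  rcases le_total x (1 / 2) with hx | hx
  · have := mul_le_sin (x := π * x) (by positivity) (by nlinarith [pi_pos])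
    rw [show 2 / π * (π * x) = 2 * x by field_simp] at this
    linarith
  · have := mul_le_sin (x := π * (1 - x)) (by nlinarith [pi_pos]) (by nlinarith [pi_pos])
    rw [show 2 / π * (π * (1 - x)) = 2 * (1 - x) by field_simp, mul_one_sub π x, sin_pi_sub]
      at this
    linarith

theorem two_thirds_mul_abs_le_abs_sin_pi_mul {x : ℝ} (hx : |x| ≤ 3 / 4) :
    2 / 3 * |x| ≤ |sin (π * x)| := by
  rcases le_total 0 x with h | h
  · rw [abs_of_nonneg h] at hx ⊢
    exact (two_thirds_mul_le_sin_pi_mul h hx).trans (le_abs_self _)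
  · rw [abs_of_nonpos h] at hx ⊢
    have := two_thirds_mul_le_sin_pi_mul (neg_nonneg.2 h) hx
    rw [mul_neg π x, sin_neg] at this
    exact this.trans (neg_le_abs _)

theorem two_mul_abs_sin_pi_mul_le_sqrtAlpha (B x : ℝ) : 2 * |sin (π * x)| ≤ sqrtAlpha B x := by
  rw [sqrtAlpha, le_sqrt (by positivity) (by have := alphaHat_nonneg x; positivity), mul_pow,
    sq_abs, alphaHat]
  nlinarith [sq_nonneg B]

theorem two_thirds_mul_abs_le_sqrtAlpha {B k x : ℝ} (hk : |k| ≤ 1 / 2)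
    (hx : x ∈ closedBall k (|k| / 2)) : 2 / 3 * |k| ≤ sqrtAlpha B x := by
  rw [mem_closedBall, dist_eq_norm, Real.norm_eq_abs] at hx
  have hlow : |k| / 2 ≤ |x| := by linarith [abs_sub_abs_le_abs_sub k x, abs_sub_comm x k]
  have hup : |x| ≤ 3 / 4 := by linarith [abs_sub_abs_le_abs_sub x k]
  linarith [two_thirds_mul_abs_le_abs_sin_pi_mul hup, two_mul_abs_sin_pi_mul_le_sqrtAlpha B x]

theorem stmt_13 :
    ∃ C : ℝ, 0 < C ∧
      ∀ B : ℝ, 0 ≤ B → ∀ ε : ℝ, ε ∈ Set.Ioo (0 : ℝ) 1 → ∀ i : ℕ, (i = 1 ∨ i = 2) →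
        ∀ p k : ℝ, 0 < |k| → |k| ≤ 1 / 2 → ε * |p| < |k| →
          |omegaF B i (k + ε * p / 2) - omegaF B i (k - ε * p / 2) - ε * p * vF B k| ≤
            C * ε ^ 2 * p ^ 2 / |k| := by
  refine ⟨6 * π ^ 2, by positivity, ?_⟩
  intro B _ ε hε i _ p k hk0 hk hεp
  have hy : |ε * p / 2| ≤ |k| / 2 := by
    rw [abs_div, abs_mul, abs_of_pos hε.1, abs_two]
    linarith
  have hpos (x : ℝ) (hx : x ∈ closedBall k (|k| / 2)) : 0 < sqrtAlpha B x := by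
    linarith [two_thirds_mul_abs_le_sqrtAlpha (B := B) hk hx]
  have hM (x : ℝ) (hx : x ∈ closedBall k (|k| / 2)) :
      |(4 * π ^ 2 * cos (2 * π * x) - vF B x ^ 2) / sqrtAlpha B x| ≤ 12 * π ^ 2 / |k| :=
    calc _ ≤ 8 * π ^ 2 / sqrtAlpha B x := abs_deriv_vF_le B x
      _ ≤ 8 * π ^ 2 / (2 / 3 * |k|) := by
        gcongr
        exact two_thirds_mul_abs_le_sqrtAlpha hk hx
      _ = 12 * π ^ 2 / |k| := by field_simp; ring
  have taylor := abs_sub_sub_two_mul_le_of_abs_deriv_le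
    (fun x hx => hasDerivAt_sqrtAlpha (hpos x hx)) (fun x hx => hasDerivAt_vF (hpos x hx)) hM hy
  convert taylor using 1
  · simp only [omegaF, sqrtAlpha]
    congr 1
    ring
  · field_simp
    ring
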